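/- Assume β_t + γ̇_t > 0 for all t ∈ [0, T]. Then the feedback coefficient for the outstanding position satisfies f_t := −ε_t⁻¹(A_t + λ_t B_t) < 0 for every t ∈ [0, T) (a larger outstanding position causes faster selling). -/

import Mathlib

/-!
Write `u = A + λB` and `v = B + λC`, so that `f = -ε⁻¹u`. The Riccati equations for `A, B, C`
become equations for `λC`, `v`, `u` and `B`, whose signs are followed backwards from the terminal
values `λ_T C_T = 1`, `v_T = u_T = 0`, `B_T = -1` by first-crossing arguments. First `λC ≤ 1`,
since `2β + γ̇ > 0` repels `λC` from `1`. Then `v > 0` on `[0, T)`, because at a zero of `v` its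
derivative is `(β + γ̇)(λC - 1) - β < 0`. Finally `u > 0` and `B < 0` on `[0, T)`: at a zero of `u`
with `B < 0`, `u̇ = λ(β + γ̇)B < 0`; at a zero of `B` with `u > 0`, `Ḃ = ε⁻¹uv > 0`; and `u`, `B`
cannot vanish together, since `(u, B)` solves a linear system with bounded coefficients
(Grönwall) and `B_T ≠ 0`.
-/

open Set MeasureTheory Matrix

/-- Market parameters: time horizon `T > 0` and bounded measurable coefficient functions
`β, λ, ε, θ, σ : [0,T] → ℝ` with `β > 0`, `σ ≥ 0`, `λ` and `ε` positive and bounded away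
from zero, `λ` differentiable with bounded derivative `lam'`, and the no-arbitrage
condition `2β_t + γ̇_t > 0` where `γ = log λ` (so `γ̇ = λ'/λ`). -/
structure Params where
  T : ℝ
  beta : ℝ → ℝ
  lam : ℝ → ℝ
  lam' : ℝ → ℝ
  eps : ℝ → ℝ
  theta : ℝ → ℝ
  sigma : ℝ → ℝ
  hT : 0 < T
  hbeta_meas : Measurable beta
  htheta_meas : Measurable theta
  hsigma_meas : Measurable sigma
  heps_meas : Measurable eps
  hbeta_bdd : ∃ M, ∀ t ∈ Icc 0 T, |beta t| ≤ M
  htheta_bdd : ∃ M, ∀ t ∈ Icc 0 T, |theta t| ≤ M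
  hsigma_bdd : ∃ M, ∀ t ∈ Icc 0 T, |sigma t| ≤ M
  hbeta_pos : ∀ t ∈ Icc 0 T, 0 < beta t
  hsigma_nonneg : ∀ t ∈ Icc 0 T, 0 ≤ sigma t
  heps_lb : ∃ c, 0 < c ∧ ∀ t ∈ Icc 0 T, c ≤ eps t
  heps_ub : ∃ M, ∀ t ∈ Icc 0 T, eps t ≤ M
  hlam_lb : ∃ c, 0 < c ∧ ∀ t ∈ Icc 0 T, c ≤ lam t
  hlam_ub : ∃ M, ∀ t ∈ Icc 0 T, lam t ≤ M
  hlam_deriv : ∀ t, HasDerivAt lam (lam' t) t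
  hlam'_bdd : ∃ M, ∀ t, |lam' t| ≤ M
  hnoarb : ∀ t ∈ Icc 0 T, 0 < 2 * beta t + lam' t / lam t

/-- `γ̇_t = λ'_t / λ_t`, the derivative of `γ = log λ`. -/
noncomputable def gammaDot (P : Params) (t : ℝ) : ℝ := P.lam' t / P.lam t

/-- The backward Riccati ODE system on `[0,T]` with its terminal conditions. -/
def IsRiccatiSol (P : Params) (A B C D E F K : ℝ → ℝ) : Prop :=
  (∀ t ∈ Icc (0:ℝ) P.T,
      HasDerivAt A ((P.eps t)⁻¹ * (A t + P.lam t * B t) ^ 2) t) ∧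
  A P.T = P.lam P.T ∧
  (∀ t ∈ Icc (0:ℝ) P.T,
      HasDerivAt B ((P.eps t)⁻¹ * (A t + P.lam t * B t) * (B t + P.lam t * C t)
        + P.beta t * B t) t) ∧
  B P.T = -1 ∧
  (∀ t ∈ Icc (0:ℝ) P.T,
      HasDerivAt C ((P.eps t)⁻¹ * (B t + P.lam t * C t) ^ 2 + 2 * P.beta t * C t
        - (P.lam t)⁻¹ * (2 * P.beta t + gammaDot P t)) t) ∧
  C P.T = (P.lam P.T)⁻¹ ∧
  (∀ t ∈ Icc (0:ℝ) P.T,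
      HasDerivAt D ((P.eps t)⁻¹ * (A t + P.lam t * B t) * (D t + P.lam t * E t)
        - P.theta t * (A t - D t)) t) ∧
  D P.T = 0 ∧
  (∀ t ∈ Icc (0:ℝ) P.T,
      HasDerivAt E ((P.eps t)⁻¹ * (B t + P.lam t * C t) * (D t + P.lam t * E t)
        - P.theta t * (B t - E t) + P.beta t * E t) t) ∧
  E P.T = 0 ∧
  (∀ t ∈ Icc (0:ℝ) P.T,
      HasDerivAt F ((P.eps t)⁻¹ * (D t + P.lam t * E t) ^ 2
        - 2 * P.theta t * (D t - F t)) t) ∧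
  F P.T = 0 ∧
  (∀ t ∈ Icc (0:ℝ) P.T,
      HasDerivAt K (-(P.sigma t) ^ 2 * (A t - 2 * D t + F t) / 2) t) ∧
  K P.T = 0

open Filter Topology Asymptotics

theorem Filter.boundedAtFilter_principal_iff {α : Type*} {S : Set α} {f : α → ℝ} :
    BoundedAtFilter (𝓟 S) f ↔ ∃ M, ∀ t ∈ S, |f t| ≤ M := by
  simp [BoundedAtFilter, isBigO_principal]

theorem IsCompact.boundedAtFilter_of_continuousOn {α : Type*} [TopologicalSpace α] {S : Set α}
    {f : α → ℝ} (hS : IsCompact S) (hf : ContinuousOn f S) : BoundedAtFilter (𝓟 S) f :=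
  boundedAtFilter_principal_iff.2 (hS.exists_bound_of_continuousOn hf)

section DerivSign

variable {f : ℝ → ℝ} {f' s b : ℝ}

theorem HasDerivAt.eventually_nhdsGT_lt_of_neg (hf : HasDerivAt f f' s) (hf' : f' < 0) :
    ∀ᶠ t in 𝓝[>] s, f t < f s := by
  filter_upwards [(hasDerivAt_iff_tendsto_slope_left_right.1 hf).2.eventually_lt_const hf',
    self_mem_nhdsWithin] with t hslope (hst : s < t)
  rw [slope_def_field, div_lt_iff₀ (sub_pos.2 hst)] at hslope
  linarith

theorem HasDerivAt.eventually_nhdsLT_gt_of_neg (hf : HasDerivAt f f' s) (hf' : f' < 0) :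
    ∀ᶠ t in 𝓝[<] s, f s < f t := by
  filter_upwards [(hasDerivAt_iff_tendsto_slope_left_right.1 hf).1.eventually_lt_const hf',
    self_mem_nhdsWithin] with t hslope (hts : t < s)
  rw [slope_def_field, div_lt_iff_of_neg (sub_neg.2 hts)] at hslope
  linarith

theorem ContinuousAt.nonneg_of_pos_on_Ioo (hf : ContinuousAt f s) (hsb : s < b)
    (hpos : ∀ t ∈ Ioo s b, 0 < f t) : 0 ≤ f s :=
  ge_of_tendsto (hf.continuousWithinAt (s := Ioi s))
    (eventually_of_mem (Ioo_mem_nhdsGT hsb) fun t ht => (hpos t ht).le)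

theorem HasDerivAt.nonneg_of_pos_on_Ioo (hf : HasDerivAt f f' s) (hs : f s = 0) (hsb : s < b)
    (hpos : ∀ t ∈ Ioo s b, 0 < f t) : 0 ≤ f' := by
  by_contra! hf'
  obtain ⟨t, hneg, hpos⟩ := ((hf.eventually_nhdsGT_lt_of_neg hf').and
    (eventually_of_mem (Ioo_mem_nhdsGT hsb) hpos)).exists
  linarith

end DerivSign

theorem ContinuousOn.forall_Ico_pos_of_backward {g : ℝ → ℝ} {a b : ℝ}
    (hg : ContinuousOn g (Icc a b)) (hb : ∀ᶠ t in 𝓝[<] b, 0 < g t)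
    (hstep : ∀ s ∈ Ico a b, (∀ t ∈ Ioo s b, 0 < g t) → 0 < g s) :
    ∀ t ∈ Ico a b, 0 < g t := by
  by_contra! hbad
  obtain ⟨t₀, ht₀, hgt₀⟩ := hbad
  obtain ⟨c, hcb, hc⟩ := mem_nhdsLT_iff_exists_Ioo_subset.1 hb
  have hle_c : ∀ t ∈ Ico a b, g t ≤ 0 → t ≤ c := fun t ht hgt =>
    not_lt.1 fun hct => (hc ⟨hct, ht.2⟩ : 0 < g t).not_ge hgt
  set S := Icc a c ∩ g ⁻¹' Iic 0
  have hS : IsClosed S :=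
    (hg.mono (Icc_subset_Icc_right hcb.le)).preimage_isClosed_of_isClosed isClosed_Icc isClosed_Iic
  have ht₀S : t₀ ∈ S := ⟨⟨ht₀.1, hle_c t₀ ht₀ hgt₀⟩, hgt₀⟩
  have hbdd : BddAbove S := ⟨c, fun t ht => ht.1.2⟩
  obtain ⟨⟨has, hsc⟩, hgs⟩ := hS.csSup_mem ⟨t₀, ht₀S⟩ hbdd
  refine (hstep (sSup S) ⟨has, hsc.trans_lt hcb⟩ fun t ht => ?_).not_ge hgs
  by_contra! hgt
  have htS : t ∈ S := ⟨⟨has.trans ht.1.le, hle_c t ⟨has.trans ht.1.le, ht.2⟩ hgt⟩, hgt⟩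
  exact (le_csSup hbdd htS).not_gt ht.1

theorem forall_Ico_pos_of_deriv_neg_of_eq_zero {f f' : ℝ → ℝ} {a b : ℝ}
    (hf : ∀ t ∈ Icc a b, HasDerivAt f (f' t) t) (hb : 0 ≤ f b)
    (hzero : ∀ t ∈ Icc a b, f t = 0 → f' t < 0) : ∀ t ∈ Ico a b, 0 < f t := by
  intro t ht
  have hbI : b ∈ Icc a b := ⟨ht.1.trans ht.2.le, le_rfl⟩
  refine ContinuousOn.forall_Ico_pos_of_backward
    (fun t ht => (hf t ht).continuousAt.continuousWithinAt) ?_ (fun s hs hpos => ?_) t ht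
  · rcases hb.lt_or_eq with hpos | hzero'
    · exact ((hf b hbI).continuousAt.eventually (lt_mem_nhds hpos)).filter_mono nhdsWithin_le_nhds
    · simpa only [← hzero'] using (hf b hbI).eventually_nhdsLT_gt_of_neg (hzero b hbI hzero'.symm)
  · have hsI : s ∈ Icc a b := Ico_subset_Icc_self hs
    refine ((hf s hsI).continuousAt.nonneg_of_pos_on_Ioo hs.2 hpos).lt_of_ne fun hzero' => ?_
    exact ((hf s hsI).nonneg_of_pos_on_Ioo hzero'.symm hs.2 hpos).not_gt (hzero s hsI hzero'.symm)

theorem abs_mul_add_mul_le (a b x y : ℝ) : |a * x + b * y| ≤ (|a| + |b|) * max |x| |y| :=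
  calc |a * x + b * y| ≤ |a| * |x| + |b| * |y| := by
        simpa only [abs_mul] using abs_add_le (a * x) (b * y)
    _ ≤ |a| * max |x| |y| + |b| * max |x| |y| := by gcongr <;> simp
    _ = (|a| + |b|) * max |x| |y| := by ring

theorem eq_zero_of_linear_system {x y a b c d : ℝ → ℝ} {s T : ℝ}
    (hx : ∀ t ∈ Icc s T, HasDerivAt x (a t * x t + b t * y t) t)
    (hy : ∀ t ∈ Icc s T, HasDerivAt y (c t * x t + d t * y t) t)
    (ha : BoundedAtFilter (𝓟 (Icc s T)) a) (hb : BoundedAtFilter (𝓟 (Icc s T)) b)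
    (hc : BoundedAtFilter (𝓟 (Icc s T)) c) (hd : BoundedAtFilter (𝓟 (Icc s T)) d)
    (hx₀ : x s = 0) (hy₀ : y s = 0) : ∀ t ∈ Icc s T, x t = 0 ∧ y t = 0 := by
  obtain ⟨Ka, hKa⟩ := boundedAtFilter_principal_iff.1 ha
  obtain ⟨Kb, hKb⟩ := boundedAtFilter_principal_iff.1 hb
  obtain ⟨Kc, hKc⟩ := boundedAtFilter_principal_iff.1 hc
  obtain ⟨Kd, hKd⟩ := boundedAtFilter_principal_iff.1 hd
  have hzero := eq_zero_of_abs_deriv_le_mul_abs_self_of_eq_zero_right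
    (K := max (Ka + Kb) (Kc + Kd))
    (f := fun t => (x t, y t)) (f' := fun t => (a t * x t + b t * y t, c t * x t + d t * y t))
    (fun t ht => ((hx t ht).continuousAt.prodMk (hy t ht).continuousAt).continuousWithinAt)
    (fun t ht => ((hx t (Ico_subset_Icc_self ht)).prodMk
      (hy t (Ico_subset_Icc_self ht))).hasDerivWithinAt)
    (by simp [hx₀, hy₀]) (fun t ht => ?_)
  · exact fun t ht => Prod.mk_eq_zero.1 (hzero t ht)
  have ht' := Ico_subset_Icc_self ht
  have hm : 0 ≤ max |x t| |y t| := (abs_nonneg _).trans (le_max_left _ _)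
  simp only [Prod.norm_def, Real.norm_eq_abs]
  refine max_le ((abs_mul_add_mul_le _ _ _ _).trans ?_) ((abs_mul_add_mul_le _ _ _ _).trans ?_)
  · exact mul_le_mul_of_nonneg_right ((add_le_add (hKa t ht') (hKb t ht')).trans
      (le_max_left _ _)) hm
  · exact mul_le_mul_of_nonneg_right ((add_le_add (hKc t ht') (hKd t ht')).trans
      (le_max_right _ _)) hm

namespace Params

variable (P : Params)

theorem T_mem : P.T ∈ Icc 0 P.T :=
  ⟨P.hT.le, le_rfl⟩

theorem lam_pos {t : ℝ} (ht : t ∈ Icc 0 P.T) : 0 < P.lam t :=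
  let ⟨_, hc, hlb⟩ := P.hlam_lb
  hc.trans_le (hlb t ht)

theorem eps_pos {t : ℝ} (ht : t ∈ Icc 0 P.T) : 0 < P.eps t :=
  let ⟨_, hc, hlb⟩ := P.heps_lb
  hc.trans_le (hlb t ht)

theorem continuous_lam : Continuous P.lam :=
  continuous_iff_continuousAt.2 fun t => (P.hlam_deriv t).continuousAt

theorem boundedAtFilter_eps_inv : BoundedAtFilter (𝓟 (Icc 0 P.T)) fun t => (P.eps t)⁻¹ := by
  obtain ⟨c, hc, hlb⟩ := P.heps_lb
  refine boundedAtFilter_principal_iff.2 ⟨c⁻¹, fun t ht => ?_⟩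
  rw [abs_inv, abs_of_pos (P.eps_pos ht)]
  exact inv_anti₀ hc (hlb t ht)

theorem boundedAtFilter_lam_mul_beta_add_lam' :
    BoundedAtFilter (𝓟 (Icc 0 P.T)) fun t => P.lam t * P.beta t + P.lam' t := by
  have hlam : BoundedAtFilter (𝓟 (Icc 0 P.T)) P.lam :=
    isCompact_Icc.boundedAtFilter_of_continuousOn P.continuous_lam.continuousOn
  have hbeta : BoundedAtFilter (𝓟 (Icc 0 P.T)) P.beta :=
    boundedAtFilter_principal_iff.2 P.hbeta_bdd
  have hlam' : BoundedAtFilter (𝓟 (Icc 0 P.T)) P.lam' :=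
    let ⟨M, hM⟩ := P.hlam'_bdd
    boundedAtFilter_principal_iff.2 ⟨M, fun t _ => hM t⟩
  exact (hlam.mul hbeta).add hlam'

theorem lam_mul_beta_add_lam'_pos (hstrong : ∀ t ∈ Icc (0:ℝ) P.T, 0 < P.beta t + gammaDot P t)
    {t : ℝ} (ht : t ∈ Icc 0 P.T) : 0 < P.lam t * P.beta t + P.lam' t := by
  have h := mul_pos (P.lam_pos ht) (hstrong t ht)
  rwa [gammaDot, mul_add, mul_div_cancel₀ _ (P.lam_pos ht).ne'] at h

end Params

namespace IsRiccatiSol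

variable {P : Params} {A B C D E F K : ℝ → ℝ} {t : ℝ}

theorem B_terminal (hsol : IsRiccatiSol P A B C D E F K) : B P.T = -1 :=
  hsol.2.2.2.1

theorem hasDerivAt_B (hsol : IsRiccatiSol P A B C D E F K) (ht : t ∈ Icc 0 P.T) :
    HasDerivAt B ((P.eps t)⁻¹ * (B t + P.lam t * C t) * (A t + P.lam t * B t)
      + P.beta t * B t) t :=
  (hsol.2.2.1 t ht).congr_deriv (by ring)

theorem hasDerivAt_lam_mul_C (hsol : IsRiccatiSol P A B C D E F K) (ht : t ∈ Icc 0 P.T) :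
    HasDerivAt (fun t => P.lam t * C t) ((P.eps t)⁻¹ * P.lam t * (B t + P.lam t * C t) ^ 2
      + (2 * P.beta t + gammaDot P t) * (P.lam t * C t - 1)) t := by
  obtain ⟨-, -, -, -, hC, -⟩ := hsol
  refine ((P.hlam_deriv t).mul (hC t ht)).congr_deriv ?_
  have := (P.lam_pos ht).ne'
  rw [gammaDot]
  field_simp
  ring

theorem hasDerivAt_A_add_lam_mul_B (hsol : IsRiccatiSol P A B C D E F K) (ht : t ∈ Icc 0 P.T) :
    HasDerivAt (fun t => A t + P.lam t * B t)
      ((P.eps t)⁻¹ * (A t + P.lam t * B t + P.lam t * (B t + P.lam t * C t))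
        * (A t + P.lam t * B t) + (P.lam t * P.beta t + P.lam' t) * B t) t :=
  ((hsol.1 t ht).add ((P.hlam_deriv t).mul (hsol.hasDerivAt_B ht))).congr_deriv (by ring)

theorem hasDerivAt_B_add_lam_mul_C (hsol : IsRiccatiSol P A B C D E F K) (ht : t ∈ Icc 0 P.T) :
    HasDerivAt (fun t => B t + P.lam t * C t)
      ((P.eps t)⁻¹ * (A t + P.lam t * B t + P.lam t * (B t + P.lam t * C t))
        * (B t + P.lam t * C t)
        + (2 * P.beta t + gammaDot P t) * (P.lam t * C t - 1) + P.beta t * B t) t :=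
  ((hsol.hasDerivAt_B ht).add (hsol.hasDerivAt_lam_mul_C ht)).congr_deriv (by ring)

theorem A_add_lam_mul_B_terminal (hsol : IsRiccatiSol P A B C D E F K) :
    A P.T + P.lam P.T * B P.T = 0 := by
  rw [hsol.2.1, hsol.B_terminal]
  ring

theorem lam_mul_C_terminal (hsol : IsRiccatiSol P A B C D E F K) : P.lam P.T * C P.T = 1 := by
  rw [hsol.2.2.2.2.2.1, mul_inv_cancel₀ (P.lam_pos P.T_mem).ne']

theorem B_add_lam_mul_C_terminal (hsol : IsRiccatiSol P A B C D E F K) :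
    B P.T + P.lam P.T * C P.T = 0 := by
  rw [hsol.lam_mul_C_terminal, hsol.B_terminal]
  ring

/-- For `δ > 0`, `1 + δ - λC` stays positive backwards from `T`: at one of its zeros
`λC - 1 = δ > 0`, so the drift `(2β + γ̇)(λC - 1)` of `λC` is strictly positive. -/
theorem lam_mul_C_le_one (hsol : IsRiccatiSol P A B C D E F K) :
    ∀ t ∈ Icc 0 P.T, P.lam t * C t ≤ 1 := by
  intro t ht
  rcases ht.2.lt_or_eq with htT | rfl
  · refine le_of_forall_pos_lt_add fun δ hδ => ?_
    have hpos := forall_Ico_pos_of_deriv_neg_of_eq_zero (f := fun t => 1 + δ - P.lam t * C t)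
      (fun s hs => (hsol.hasDerivAt_lam_mul_C hs).const_sub (1 + δ)) ?_ ?_ t ⟨ht.1, htT⟩
    · linarith
    · simp only [hsol.lam_mul_C_terminal]
      linarith
    · intro s hs hzero
      have hgap : P.lam s * C s - 1 = δ := by linarith
      have hdrift : 0 < 2 * P.beta s + gammaDot P s := P.hnoarb s hs
      have hε := P.eps_pos hs
      have hlam := P.lam_pos hs
      rw [hgap]
      nlinarith [mul_pos hdrift hδ, mul_nonneg (mul_nonneg (inv_pos.2 hε).le hlam.le)
        (sq_nonneg (B s + P.lam s * C s))]
  · exact hsol.lam_mul_C_terminal.le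

theorem B_add_lam_mul_C_pos (hsol : IsRiccatiSol P A B C D E F K)
    (hstrong : ∀ t ∈ Icc (0:ℝ) P.T, 0 < P.beta t + gammaDot P t) :
    ∀ t ∈ Ico 0 P.T, 0 < B t + P.lam t * C t := by
  refine forall_Ico_pos_of_deriv_neg_of_eq_zero
    (fun t ht => hsol.hasDerivAt_B_add_lam_mul_C ht) hsol.B_add_lam_mul_C_terminal.ge
    fun s hs hzero => ?_
  have hB : B s = -(P.lam s * C s) := by linarith
  rw [hzero, hB]
  nlinarith [mul_nonpos_of_nonneg_of_nonpos (hstrong s hs).le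
    (sub_nonpos.2 (hsol.lam_mul_C_le_one s hs)), P.hbeta_pos s hs]

theorem B_ne_zero_of_A_add_lam_mul_B_eq_zero (hsol : IsRiccatiSol P A B C D E F K) {s : ℝ}
    (hs : s ∈ Icc 0 P.T) (hu : A s + P.lam s * B s = 0) : B s ≠ 0 := by
  intro hB
  have hu' : ContinuousOn (fun t => A t + P.lam t * B t) (Icc 0 P.T) :=
    fun t ht => (hsol.hasDerivAt_A_add_lam_mul_B ht).continuousAt.continuousWithinAt
  have hv' : ContinuousOn (fun t => B t + P.lam t * C t) (Icc 0 P.T) :=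
    fun t ht => (hsol.hasDerivAt_B_add_lam_mul_C ht).continuousAt.continuousWithinAt
  have hsub : 𝓟 (Icc s P.T) ≤ 𝓟 (Icc 0 P.T) := principal_mono.2 (Icc_subset_Icc_left hs.1)
  have hzero := eq_zero_of_linear_system (x := fun t => A t + P.lam t * B t) (y := B)
    (fun t ht => hsol.hasDerivAt_A_add_lam_mul_B (Icc_subset_Icc_left hs.1 ht))
    (fun t ht => hsol.hasDerivAt_B (Icc_subset_Icc_left hs.1 ht))
    (IsBigO.mono (P.boundedAtFilter_eps_inv.mul (isCompact_Icc.boundedAtFilter_of_continuousOn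
      (hu'.add (P.continuous_lam.continuousOn.mul hv')))) hsub)
    (IsBigO.mono P.boundedAtFilter_lam_mul_beta_add_lam' hsub)
    (IsBigO.mono (P.boundedAtFilter_eps_inv.mul
      (isCompact_Icc.boundedAtFilter_of_continuousOn hv')) hsub)
    (IsBigO.mono (boundedAtFilter_principal_iff.2 P.hbeta_bdd) hsub) hu hB P.T ⟨hs.2, le_rfl⟩
  linarith [hzero.2, hsol.B_terminal]

theorem A_add_lam_mul_B_pos_and_B_neg (hsol : IsRiccatiSol P A B C D E F K)
    (hstrong : ∀ t ∈ Icc (0:ℝ) P.T, 0 < P.beta t + gammaDot P t) :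
    ∀ t ∈ Ico 0 P.T, 0 < A t + P.lam t * B t ∧ B t < 0 := by
  have hBT := hsol.B_terminal
  have hpos := ContinuousOn.forall_Ico_pos_of_backward
    (g := fun t => min (A t + P.lam t * B t) (-B t)) (a := 0) (b := P.T)
    (fun t ht => (ContinuousAt.inf (hsol.hasDerivAt_A_add_lam_mul_B ht).continuousAt
      (hsol.hasDerivAt_B ht).continuousAt.neg).continuousWithinAt) ?_ ?_
  · intro t ht
    simpa only [lt_min_iff, neg_pos] using hpos t ht
  · have hu := (hsol.hasDerivAt_A_add_lam_mul_B P.T_mem).eventually_nhdsLT_gt_of_neg (by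
      rw [hsol.A_add_lam_mul_B_terminal, hBT]
      linarith [P.lam_mul_beta_add_lam'_pos hstrong P.T_mem])
    have hB : ∀ᶠ t in 𝓝[<] P.T, 0 < -B t :=
      ((hsol.hasDerivAt_B P.T_mem).continuousAt.neg.eventually
        (lt_mem_nhds (by rw [hBT]; norm_num : (0:ℝ) < -B P.T))).filter_mono nhdsWithin_le_nhds
    filter_upwards [hu, hB] with t hut hBt
    rw [hsol.A_add_lam_mul_B_terminal] at hut
    exact lt_min hut hBt
  intro s hs hpos
  simp only [lt_min_iff, neg_pos] at hpos ⊢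
  have hsI := Ico_subset_Icc_self hs
  have hu0 : 0 ≤ A s + P.lam s * B s :=
    (hsol.hasDerivAt_A_add_lam_mul_B hsI).continuousAt.nonneg_of_pos_on_Ioo hs.2
      fun t ht => (hpos t ht).1
  have hB0 : 0 ≤ -B s := (hsol.hasDerivAt_B hsI).continuousAt.neg.nonneg_of_pos_on_Ioo
    hs.2 fun t ht => neg_pos.2 (hpos t ht).2
  rcases hu0.lt_or_eq with hu | hu
  · refine ⟨hu, (neg_nonneg.1 hB0).lt_of_ne fun hB => ?_⟩
    have hderiv := (hsol.hasDerivAt_B hsI).neg.nonneg_of_pos_on_Ioo (by simp [hB]) hs.2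
      fun t ht => neg_pos.2 (hpos t ht).2
    have hv := hsol.B_add_lam_mul_C_pos hstrong s hs
    rw [hB] at hderiv hu hv
    nlinarith [mul_pos (mul_pos (inv_pos.2 (P.eps_pos hsI)) hv) hu]
  · have hB : B s < 0 :=
      (neg_nonneg.1 hB0).lt_of_ne (hsol.B_ne_zero_of_A_add_lam_mul_B_eq_zero hsI hu.symm)
    have hderiv := (hsol.hasDerivAt_A_add_lam_mul_B hsI).nonneg_of_pos_on_Ioo hu.symm hs.2
      fun t ht => (hpos t ht).1
    rw [← hu] at hderiv
    nlinarith [mul_neg_of_pos_of_neg (P.lam_mul_beta_add_lam'_pos hstrong hsI) hB]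

end IsRiccatiSol

/-- If `β_t + γ̇_t > 0` on `[0,T]`, then the feedback coefficient for
the outstanding position satisfies `f_t := −ε_t⁻¹(A_t + λ_t B_t) < 0` on `[0,T)`. -/
theorem feedback_f_neg (P : Params)
    (hstrong : ∀ t ∈ Icc (0:ℝ) P.T, 0 < P.beta t + gammaDot P t)
    (A B C D E F K : ℝ → ℝ) (hsol : IsRiccatiSol P A B C D E F K) :
    ∀ t ∈ Ico (0:ℝ) P.T, -(P.eps t)⁻¹ * (A t + P.lam t * B t) < 0 := by
  intro t ht
  rw [neg_mul, neg_lt_zero]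
  exact mul_pos (inv_pos.2 (P.eps_pos (Ico_subset_Icc_self ht)))
    (hsol.A_add_lam_mul_B_pos_and_B_neg hstrong t ht).1
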